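/- arXiv:2009.13970 — 5 statements merged into one kernel-verified Lean document; each statement's English description precedes it below -/
import Mathlib

section
/- Let G be a finite p-group with γ₂(G)^p γ₄(G) = 1, and let S = G ⋊ A where A is an abelian group acting on G with [G,A] ⊆ γ₃(G) and [A, γ₂(G)] = 1. Then γ₂(S) = γ₂(G). -/
/-!
`S` is generated by `G` and `A`, and `γ₂(G) = [G, G]` is normal in `S`. Modulo `γ₂(G)` the images
of `G` and of the abelian group `A` are abelian and, since `[G, A] ≤ γ₃(G) ≤ γ₂(G)`, commute with
each other; hence `S / γ₂(G)` is abelian and `γ₂(S) ≤ γ₂(G)`.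
-/

namespace Subgroup

variable {G : Type*} [Group G]

theorem commutator_le_iff_map_le_centralizer (H K M : Subgroup G) [M.Normal] :
    ⁅H, K⁆ ≤ M ↔ H.map (QuotientGroup.mk' M) ≤ centralizer (K.map (QuotientGroup.mk' M)) := by
  rw [← commutator_eq_bot_iff_le_centralizer, ← map_commutator, map_eq_bot_iff,
    QuotientGroup.ker_mk']

theorem commutator_sup_left_le_iff (H₁ H₂ K M : Subgroup G) [M.Normal] :
    ⁅H₁ ⊔ H₂, K⁆ ≤ M ↔ ⁅H₁, K⁆ ≤ M ∧ ⁅H₂, K⁆ ≤ M := by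
  simp only [commutator_le_iff_map_le_centralizer, map_sup, sup_le_iff]

theorem commutator_sup_right_le_iff (H K₁ K₂ M : Subgroup G) [M.Normal] :
    ⁅H, K₁ ⊔ K₂⁆ ≤ M ↔ ⁅H, K₁⁆ ≤ M ∧ ⁅H, K₂⁆ ≤ M := by
  simp only [commutator_comm H, commutator_sup_left_le_iff]

theorem commutator_eq_of_sup_eq_top {N H : Subgroup G} [N.Normal] (hNH : N ⊔ H = ⊤)
    (hH : ⁅H, H⁆ = ⊥) (hmix : ⁅N, H⁆ ≤ ⁅N, N⁆) : _root_.commutator G = ⁅N, N⁆ := by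
  refine le_antisymm ?_ (commutator_mono le_top le_top)
  rw [_root_.commutator_def, ← hNH, commutator_sup_left_le_iff, commutator_sup_right_le_iff,
    commutator_sup_right_le_iff, commutator_comm H N, hH]
  exact ⟨⟨le_rfl, hmix⟩, hmix, bot_le⟩

end Subgroup

namespace SemidirectProduct

variable {N G : Type*} [Group N]

section

variable [Group G] {φ : G →* MulAut N}

theorem range_inl_sup_range_inr :
    (inl : N →* N ⋊[φ] G).range ⊔ (inr : G →* N ⋊[φ] G).range = ⊤ :=
  eq_top_iff.mpr fun x _ ↦ inl_left_mul_inr_right x ▸ Subgroup.mul_mem_sup ⟨_, rfl⟩ ⟨_, rfl⟩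

instance range_inl_normal : (inl : N →* N ⋊[φ] G).range.Normal :=
  range_inl_eq_ker_rightHom (φ := φ) ▸ MonoidHom.normal_ker _

end

theorem commutator_eq_map_inl [CommGroup G] {φ : G →* MulAut N}
    (h : ⁅(inl : N →* N ⋊[φ] G).range, (inr : G →* N ⋊[φ] G).range⁆ ≤
      (commutator N).map (inl : N →* N ⋊[φ] G)) :
    commutator (N ⋊[φ] G) = (commutator N).map inl := by
  have hN : ⁅(inl : N →* N ⋊[φ] G).range, (inl : N →* N ⋊[φ] G).range⁆ =
      (commutator N).map inl := by
    rw [commutator_def, Subgroup.map_commutator, ← MonoidHom.range_eq_map]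
  have hG : ⁅(inr : G →* N ⋊[φ] G).range, (inr : G →* N ⋊[φ] G).range⁆ = ⊥ :=
    Subgroup.commutator_self_eq_bot_iff.mpr inferInstance
  rw [Subgroup.commutator_eq_of_sup_eq_top range_inl_sup_range_inr hG (hN ▸ h), hN]

end SemidirectProduct

theorem gamma2_semidirect_general (G : Type*) [Group G] (A : Type*) [CommGroup A] (φ : A →* MulAut G)
    (hGA : ⁅(SemidirectProduct.inl : G →* G ⋊[φ] A).range,
        (SemidirectProduct.inr : A →* G ⋊[φ] A).range⁆
      ≤ ((⊤ : Subgroup G).lowerCentralSeries 2).map (SemidirectProduct.inl : G →* G ⋊[φ] A)) :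
    (⊤ : Subgroup (G ⋊[φ] A)).lowerCentralSeries 1
      = ((⊤ : Subgroup G).lowerCentralSeries 1).map (SemidirectProduct.inl : G →* G ⋊[φ] A) := by
  have hγ₃_le_γ₂ : (⊤ : Subgroup G).lowerCentralSeries 2 ≤ (⊤ : Subgroup G).lowerCentralSeries 1 :=
    Subgroup.lowerCentralSeries_antitone ⊤ (by norm_num)
  rw [Subgroup.top_lowerCentralSeries_one] at hγ₃_le_γ₂ ⊢
  exact SemidirectProduct.commutator_eq_map_inl (hGA.trans (Subgroup.map_mono hγ₃_le_γ₂))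

/-- If `G` is a finite `p`-group with `γ₂(G)^p γ₄(G) = 1` and `S = G ⋊ A` with `A` abelian,
`[G,A] ⊆ γ₃(G)` and `[A, γ₂(G)] = 1`, then `γ₂(S) = γ₂(G)`. -/
theorem gamma2_semidirect (p : ℕ) [Fact p.Prime] (G : Type*) [Group G] [Fintype G]
    (hG : IsPGroup p G) (A : Type*) [CommGroup A] (φ : A →* MulAut G)
    (hexp : ∀ x ∈ (⊤ : Subgroup G).lowerCentralSeries 1, x ^ p = 1)
    (hγ4 : (⊤ : Subgroup G).lowerCentralSeries 3 = ⊥)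
    (hGA : ⁅(SemidirectProduct.inl : G →* G ⋊[φ] A).range,
        (SemidirectProduct.inr : A →* G ⋊[φ] A).range⁆
      ≤ ((⊤ : Subgroup G).lowerCentralSeries 2).map (SemidirectProduct.inl : G →* G ⋊[φ] A))
    (hAγ2 : ⁅(SemidirectProduct.inr : A →* G ⋊[φ] A).range,
        ((⊤ : Subgroup G).lowerCentralSeries 1).map (SemidirectProduct.inl : G →* G ⋊[φ] A)⁆ = ⊥) :
    (⊤ : Subgroup (G ⋊[φ] A)).lowerCentralSeries 1
      = ((⊤ : Subgroup G).lowerCentralSeries 1).map (SemidirectProduct.inl : G →* G ⋊[φ] A) :=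
  gamma2_semidirect_general G A φ hGA
end

section
/- Let G be a finite p-group of class at most 3 with γ₂(G) elementary abelian, and S = G ⋊ A with A abelian, [G,A] ⊆ γ₃(G) and [A, γ₂(G)] = 1. Then Z(S) ∩ γ₂(S) = Z(G) ∩ γ₂(G). -/
/-!
Since `A` is abelian, every commutator of `S = G ⋊ A` lies in `G`; modulo `γ₂(G)` it is a
product of elements `x · φ_b(x)⁻¹ ∈ [G, A] ⊆ γ₃(G)`, so `γ₂(S) = γ₂(G)`. An element of `G` is
central in `S` iff it is central in `G` and fixed by `A`, and `A` fixes `γ₂(G)` pointwise.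
-/

open Subgroup SemidirectProduct
open scoped commutatorElement

namespace SemidirectProduct

section
variable {G A : Type*} [Group G] [Group A] (φ : A →* MulAut G)

lemma commutatorElement_inl_inr (x : G) (b : A) :
    ⁅(inl : G →* G ⋊[φ] A) x, inr b⁆ = (inl : G →* G ⋊[φ] A) (x * φ b x⁻¹) := by
  ext <;> simp [commutatorElement_def]

lemma commutatorElement_inr_inl (b : A) (x : G) :
    ⁅(inr : A →* G ⋊[φ] A) b, inl x⁆ = (inl : G →* G ⋊[φ] A) (φ b x * x⁻¹) := by
  ext <;> simp [commutatorElement_def]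

lemma mul_map_inv_mem_of_commutator_range_le {N : Subgroup G}
    (h : ⁅(inl : G →* G ⋊[φ] A).range, (inr : A →* G ⋊[φ] A).range⁆ ≤ N.map inl)
    (x : G) (b : A) : x * φ b x⁻¹ ∈ N := by
  have hmem := h (commutator_mem_commutator ⟨x, rfl⟩ ⟨b, rfl⟩)
  rwa [commutatorElement_inl_inr, mem_map_iff_mem inl_injective] at hmem

lemma map_eq_self_of_commutator_range_eq_bot {N : Subgroup G}
    (h : ⁅(inr : A →* G ⋊[φ] A).range, N.map (inl : G →* G ⋊[φ] A)⁆ = ⊥)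
    {x : G} (hx : x ∈ N) (b : A) : φ b x = x := by
  have hmem : ⁅(inr : A →* G ⋊[φ] A) b, inl x⁆ ∈ (⊥ : Subgroup (G ⋊[φ] A)) :=
    h ▸ commutator_mem_commutator ⟨b, rfl⟩ (mem_map_of_mem _ hx)
  rw [mem_bot, commutatorElement_inr_inl, map_eq_one_iff _ inl_injective] at hmem
  exact mul_inv_eq_one.mp hmem

lemma inl_mem_center_iff {x : G} :
    (inl : G →* G ⋊[φ] A) x ∈ center (G ⋊[φ] A) ↔ x ∈ center G ∧ ∀ b, φ b x = x := by
  constructor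
  · intro h
    refine ⟨mem_center_iff.2 fun g => inl_injective (φ := φ) ?_, fun b => ?_⟩
    · simpa only [map_mul] using mem_center_iff.1 h ((inl : G →* G ⋊[φ] A) g)
    · simpa using congrArg left (mem_center_iff.1 h ((inr : A →* G ⋊[φ] A) b))
  · rintro ⟨hx, hfix⟩
    refine mem_center_iff.2 fun t => ?_
    ext <;> simp [hfix, mem_center_iff.1 hx]

lemma center_inf_map_inl {N : Subgroup G} (hN : ∀ x ∈ N, ∀ b, φ b x = x) :
    center (G ⋊[φ] A) ⊓ N.map inl = (center G ⊓ N).map inl := by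
  ext s
  constructor
  · rintro ⟨hs, x, hx, rfl⟩
    exact ⟨x, ⟨((inl_mem_center_iff φ).1 hs).1, hx⟩, rfl⟩
  · rintro ⟨x, ⟨hz, hx⟩, rfl⟩
    exact ⟨(inl_mem_center_iff φ).2 ⟨hz, hN x hx⟩, x, hx, rfl⟩

lemma map_inl_commutator_le : (commutator G).map inl ≤ commutator (G ⋊[φ] A) := by
  rw [commutator_def, commutator_def, map_commutator]
  exact commutator_mono le_top le_top

end

section
variable {G A : Type*} [Group G] [CommGroup A] (φ : A →* MulAut G)

lemma commutatorElement_eq_inl (s t : G ⋊[φ] A) :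
    ⁅s, t⁆ = (inl : G →* G ⋊[φ] A)
      (s.left * φ s.right t.left * φ t.right s.left⁻¹ * t.left⁻¹) := by
  ext
  · simp only [commutatorElement_def, mul_left, inv_left, mul_right, inv_right, left_inl]
    rw [mul_inv_cancel_comm, mul_comm s.right, map_mul, MulAut.mul_apply]
    simp [mul_assoc]
  · simp [commutatorElement_def, mul_comm s.right t.right]

lemma commutator_le_map_inl {N : Subgroup G} [hN : N.Normal] (hGN : commutator G ≤ N)
    (hφN : ∀ x b, x * φ b x⁻¹ ∈ N) : commutator (G ⋊[φ] A) ≤ N.map inl := by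
  refine commutator_le.mpr fun s _ t _ => ?_
  rw [commutatorElement_eq_inl]
  refine mem_map_of_mem _ ?_
  set a := s.left
  set c := t.left
  have hc : φ s.right c * c⁻¹ ∈ N := by simpa using inv_mem (hφN c s.right)
  have ha : φ t.right a⁻¹ * a ∈ N := by simpa using inv_mem (hφN a⁻¹ t.right)
  have hac : ⁅a, c⁆ ∈ N := hGN (commutator_mem_commutator (mem_top a) (mem_top c))
  have e : a * φ s.right c * φ t.right a⁻¹ * c⁻¹
      = a * (φ s.right c * c⁻¹) * a⁻¹ * ((a * c) * (φ t.right a⁻¹ * a) * (a * c)⁻¹)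
        * ⁅a, c⁆ := by
    rw [commutatorElement_def]; group
  rw [e]
  exact mul_mem (mul_mem (hN.conj_mem _ hc a) (hN.conj_mem _ ha _)) hac

lemma commutator_eq_map_inl_s4 (hφ : ∀ x b, x * φ b x⁻¹ ∈ commutator G) :
    commutator (G ⋊[φ] A) = (commutator G).map inl :=
  le_antisymm (commutator_le_map_inl φ le_rfl hφ) (map_inl_commutator_le φ)

end

end SemidirectProduct

theorem center_meet_gamma2_semidirect_general (G : Type*) [Group G]
    (A : Type*) [CommGroup A] (φ : A →* MulAut G)
    (hGA : ⁅(SemidirectProduct.inl : G →* G ⋊[φ] A).range,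
        (SemidirectProduct.inr : A →* G ⋊[φ] A).range⁆
      ≤ ((⊤ : Subgroup G).lowerCentralSeries 2).map (SemidirectProduct.inl : G →* G ⋊[φ] A))
    (hAγ2 : ⁅(SemidirectProduct.inr : A →* G ⋊[φ] A).range,
        ((⊤ : Subgroup G).lowerCentralSeries 1).map (SemidirectProduct.inl : G →* G ⋊[φ] A)⁆ = ⊥) :
    Subgroup.center (G ⋊[φ] A) ⊓ (⊤ : Subgroup (G ⋊[φ] A)).lowerCentralSeries 1
      = (Subgroup.center G ⊓ (⊤ : Subgroup G).lowerCentralSeries 1).map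
          (SemidirectProduct.inl : G →* G ⋊[φ] A) := by
  have hγ3 : (⊤ : Subgroup G).lowerCentralSeries 2 ≤ commutator G :=
    top_lowerCentralSeries_one (G := G) ▸ Subgroup.lowerCentralSeries_antitone _ (by norm_num)
  rw [top_lowerCentralSeries_one] at hAγ2 ⊢
  rw [top_lowerCentralSeries_one, commutator_eq_map_inl_s4 φ
    (mul_map_inv_mem_of_commutator_range_le φ (hGA.trans (map_mono hγ3)))]
  exact center_inf_map_inl φ fun x hx => map_eq_self_of_commutator_range_eq_bot φ hAγ2 hx

/-- If `G` is a finite `p`-group of class at most 3 with `γ₂(G)` elementary abelian and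
`S = G ⋊ A` with `A` abelian, `[G,A] ⊆ γ₃(G)`, `[A, γ₂(G)] = 1`, then
`Z(S) ∩ γ₂(S) = Z(G) ∩ γ₂(G)`. -/
theorem center_meet_gamma2_semidirect (p : ℕ) [Fact p.Prime] (G : Type*) [Group G] [Fintype G]
    (hG : IsPGroup p G) (A : Type*) [CommGroup A] (φ : A →* MulAut G)
    (hclass : (⊤ : Subgroup G).lowerCentralSeries 3 = ⊥)
    (hexp : ∀ x ∈ (⊤ : Subgroup G).lowerCentralSeries 1, x ^ p = 1)
    (habel : ∀ x ∈ (⊤ : Subgroup G).lowerCentralSeries 1, ∀ y ∈ (⊤ : Subgroup G).lowerCentralSeries 1, x * y = y * x)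
    (hGA : ⁅(SemidirectProduct.inl : G →* G ⋊[φ] A).range,
        (SemidirectProduct.inr : A →* G ⋊[φ] A).range⁆
      ≤ ((⊤ : Subgroup G).lowerCentralSeries 2).map (SemidirectProduct.inl : G →* G ⋊[φ] A))
    (hAγ2 : ⁅(SemidirectProduct.inr : A →* G ⋊[φ] A).range,
        ((⊤ : Subgroup G).lowerCentralSeries 1).map (SemidirectProduct.inl : G →* G ⋊[φ] A)⁆ = ⊥) :
    Subgroup.center (G ⋊[φ] A) ⊓ (⊤ : Subgroup (G ⋊[φ] A)).lowerCentralSeries 1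
      = (Subgroup.center G ⊓ (⊤ : Subgroup G).lowerCentralSeries 1).map
          (SemidirectProduct.inl : G →* G ⋊[φ] A) :=
  center_meet_gamma2_semidirect_general G A φ hGA hAγ2
end

section
/- Let G be a finite p-group of nilpotency class 3 such that γ₂(G)/γ₃(G) is cyclic and γ₃(G) is elementary abelian. Then Z(G) ∩ γ₂(G) = γ₂(G)^p γ₃(G), and this subgroup has index p in γ₂(G). -/
/-!
For `x ∈ γ₂(G)` every commutator `⁅x, g⁆` lies in `γ₃(G)`, which is central of exponent `p`;
hence `⁅x ^ p, g⁆ = ⁅x, g⁆ ^ p = 1` and `γ₂(G)^p γ₃(G) ≤ Z(G) ∩ γ₂(G)`, while `γ₂(G)` itself is not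
central because `γ₃(G) ≠ 1`. Modulo `γ₃(G)`, the subgroup `γ₂(G)^p γ₃(G)` becomes the subgroup of
`p`-th powers of the nontrivial cyclic `p`-group `γ₂(G)/γ₃(G)`, which has index `p`. A subgroup
strictly between a subgroup of prime index and the whole group cannot exist, so
`Z(G) ∩ γ₂(G) = γ₂(G)^p γ₃(G)`.
-/

open Subgroup
open scoped commutatorElement

theorem commutatorElement_pow_left_of_commute {G : Type*} [Group G] {x g : G}
    (h : Commute x ⁅x, g⁆) (n : ℕ) : ⁅x ^ n, g⁆ = ⁅x, g⁆ ^ n := by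
  induction n with
  | zero => simp
  | succ n ih =>
    rw [pow_succ', commutatorElement_mul_left_eq_conj_mul, ih, (h.pow_right n).eq, pow_succ]
    group

theorem pow_mem_center_of_commutatorElement_mem_center {G : Type*} [Group G] {x : G} {n : ℕ}
    (hcen : ∀ g, ⁅x, g⁆ ∈ center G) (hpow : ∀ g : G, ⁅x, g⁆ ^ n = 1) : x ^ n ∈ center G :=
  mem_center_iff.mpr fun g => (commutatorElement_eq_one_iff_mul_comm.mp <| by
    rw [commutatorElement_pow_left_of_commute (mem_center_iff.mp (hcen g) x), hpow g]).symm

theorem Subgroup.eq_of_le_of_not_le_of_relIndex_prime {G : Type*} [Group G] {H M K : Subgroup G}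
    (hHM : H ≤ M) (hMK : M ≤ K) (hKM : ¬K ≤ M) (hp : (H.relIndex K).Prime) : M = H := by
  rw [← relIndex_mul_relIndex H M K hHM hMK, Nat.prime_mul_iff, relIndex_eq_one,
    relIndex_eq_one] at hp
  exact le_antisymm (hp.resolve_left fun h => hKM h.2).2 hHM

theorem IsCyclic.index_closure_range_pow {Q : Type*} [Group Q] [IsCyclic Q] [Finite Q] (d : ℕ) :
    (closure (Set.range (· ^ d : Q → Q))).index = (Nat.card Q).gcd d := by
  let := IsCyclic.commGroup (α := Q)
  rw [← IsCyclic.index_powMonoidHom_range]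
  congr 1
  exact closure_eq (powMonoidHom d : Q →* Q).range

theorem IsPGroup.index_closure_range_pow_of_isCyclic {p : ℕ} [Fact p.Prime] {Q : Type*} [Group Q]
    [IsCyclic Q] [Finite Q] [Nontrivial Q] (hQ : IsPGroup p Q) :
    (closure (Set.range (· ^ p : Q → Q))).index = p := by
  obtain ⟨n, hn, hcard⟩ := hQ.nontrivial_iff_card.mp ‹_›
  rw [IsCyclic.index_closure_range_pow, hcard, Nat.gcd_eq_right (dvd_pow_self p hn.ne')]

theorem QuotientGroup.comap_mk'_closure_range_pow {K : Type*} [Group K] (M : Subgroup K) [M.Normal]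
    (d : ℕ) :
    comap (mk' M) (closure (Set.range (· ^ d : K ⧸ M → K ⧸ M))) =
      closure (Set.range (· ^ d : K → K)) ⊔ M := by
  have hmap : Subgroup.map (mk' M) (closure (Set.range (· ^ d : K → K))) =
      closure (Set.range (· ^ d : K ⧸ M → K ⧸ M)) := by
    rw [MonoidHom.map_closure, ← Set.range_comp, ← (mk'_surjective M).range_comp]
    rfl
  rw [← hmap, comap_map_eq, ker_mk']

theorem Subgroup.closure_image_pow_subgroupOf {G : Type*} [Group G] (K : Subgroup G) (d : ℕ) :
    (closure ((· ^ d) '' (K : Set G))).subgroupOf K = closure (Set.range (· ^ d : K → K)) := by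
  have hmap : closure ((· ^ d) '' (K : Set G)) = map K.subtype (closure (Set.range (· ^ d))) := by
    rw [MonoidHom.map_closure, ← Set.range_comp, Set.image_eq_range]
    rfl
  rw [hmap, subgroupOf, comap_map_eq_self_of_injective K.subtype_injective]

theorem Subgroup.relIndex_closure_image_pow_sup {G : Type*} [Group G] {N K : Subgroup G}
    (hNK : N ≤ K) [(N.subgroupOf K).Normal] (d : ℕ) :
    (closure ((· ^ d) '' (K : Set G)) ⊔ N).relIndex K =
      (closure (Set.range (· ^ d : K ⧸ N.subgroupOf K → _))).index := by
  have hpowK : closure ((· ^ d) '' (K : Set G)) ≤ K :=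
    (closure_le K).mpr (Set.image_subset_iff.mpr fun x hx => K.pow_mem hx d)
  rw [relIndex, subgroupOf_sup hpowK hNK, closure_image_pow_subgroupOf,
    ← QuotientGroup.comap_mk'_closure_range_pow, index_comap_of_surjective _
      (QuotientGroup.mk'_surjective _)]

theorem center_meet_gamma2_eq_general (p : ℕ) [Fact p.Prime] (G : Type*) [Group G] [Fintype G]
    (hG : IsPGroup p G)
    (hclass : Subgroup.lowerCentralSeries (⊤ : Subgroup G) 2 ≠ ⊥ ∧ Subgroup.lowerCentralSeries (⊤ : Subgroup G) 3 = ⊥)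
    (hcyc : IsCyclic
      (↥(Subgroup.lowerCentralSeries (⊤ : Subgroup G) 1) ⧸ ((Subgroup.lowerCentralSeries (⊤ : Subgroup G) 2).subgroupOf (Subgroup.lowerCentralSeries (⊤ : Subgroup G) 1))))
    (helemexp : ∀ x ∈ Subgroup.lowerCentralSeries (⊤ : Subgroup G) 2, x ^ p = 1) :
    Subgroup.center G ⊓ Subgroup.lowerCentralSeries (⊤ : Subgroup G) 1
        = Subgroup.closure ((· ^ p) '' (Subgroup.lowerCentralSeries (⊤ : Subgroup G) 1 : Set G))
            ⊔ Subgroup.lowerCentralSeries (⊤ : Subgroup G) 2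
      ∧ (Subgroup.closure ((· ^ p) '' (Subgroup.lowerCentralSeries (⊤ : Subgroup G) 1 : Set G))
            ⊔ Subgroup.lowerCentralSeries (⊤ : Subgroup G) 2).relIndex (Subgroup.lowerCentralSeries (⊤ : Subgroup G) 1) = p := by
  set K := (⊤ : Subgroup G).lowerCentralSeries 1
  set N := (⊤ : Subgroup G).lowerCentralSeries 2
  have hNZ : N ≤ center G := commutator_top_right_eq_bot_iff_le_center.mp hclass.2
  have hKZ : ¬K ≤ center G := fun h => hclass.1 (commutator_top_right_eq_bot_iff_le_center.mpr h)
  have hNK : N ≤ K := Subgroup.lowerCentralSeries_antitone _ (by norm_num)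
  have hpowZ : ∀ x ∈ K, x ^ p ∈ center G := fun x hx =>
    have hxg : ∀ g, ⁅x, g⁆ ∈ N := fun g => commutator_mem_commutator hx (mem_top g)
    pow_mem_center_of_commutatorElement_mem_center (fun g => hNZ (hxg g))
      (fun g => helemexp _ (hxg g))
  have hle : Subgroup.closure ((· ^ p) '' (K : Set G)) ⊔ N ≤ center G ⊓ K :=
    sup_le ((closure_le _).mpr <| Set.image_subset_iff.mpr fun x hx =>
      mem_inf.mpr ⟨hpowZ x hx, K.pow_mem hx p⟩) (le_inf hNZ hNK)
  have : Nontrivial (K ⧸ N.subgroupOf K) := QuotientGroup.nontrivial_iff.mpr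
    fun h => hKZ ((subgroupOf_eq_top.mp h).trans hNZ)
  have hindex : (Subgroup.closure ((· ^ p) '' (K : Set G)) ⊔ N).relIndex K = p := by
    rw [relIndex_closure_image_pow_sup hNK,
      ((hG.to_subgroup K).to_quotient _).index_closure_range_pow_of_isCyclic]
  exact ⟨eq_of_le_of_not_le_of_relIndex_prime hle inf_le_right
    (fun h => hKZ (h.trans inf_le_left)) (by rw [hindex]; exact Fact.out), hindex⟩

/-- Let `G` be a finite `p`-group of class 3 such that `γ₂(G)/γ₃(G)` is cyclic and `γ₃(G)`
is elementary abelian. Then `Z(G) ∩ γ₂(G) = γ₂(G)^p γ₃(G)`, a subgroup of index `p` in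
`γ₂(G)`. -/
theorem center_meet_gamma2_eq (p : ℕ) [Fact p.Prime] (G : Type*) [Group G] [Fintype G]
    (hG : IsPGroup p G)
    (hclass : Subgroup.lowerCentralSeries (⊤ : Subgroup G) 2 ≠ ⊥ ∧ Subgroup.lowerCentralSeries (⊤ : Subgroup G) 3 = ⊥)
    (hcyc : IsCyclic
      (↥(Subgroup.lowerCentralSeries (⊤ : Subgroup G) 1) ⧸ ((Subgroup.lowerCentralSeries (⊤ : Subgroup G) 2).subgroupOf (Subgroup.lowerCentralSeries (⊤ : Subgroup G) 1))))
    (helemexp : ∀ x ∈ Subgroup.lowerCentralSeries (⊤ : Subgroup G) 2, x ^ p = 1)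
    (helemab : ∀ x ∈ Subgroup.lowerCentralSeries (⊤ : Subgroup G) 2, ∀ y ∈ Subgroup.lowerCentralSeries (⊤ : Subgroup G) 2, x * y = y * x) :
    Subgroup.center G ⊓ Subgroup.lowerCentralSeries (⊤ : Subgroup G) 1
        = Subgroup.closure ((· ^ p) '' (Subgroup.lowerCentralSeries (⊤ : Subgroup G) 1 : Set G))
            ⊔ Subgroup.lowerCentralSeries (⊤ : Subgroup G) 2
      ∧ (Subgroup.closure ((· ^ p) '' (Subgroup.lowerCentralSeries (⊤ : Subgroup G) 1 : Set G))
            ⊔ Subgroup.lowerCentralSeries (⊤ : Subgroup G) 2).relIndex (Subgroup.lowerCentralSeries (⊤ : Subgroup G) 1) = p :=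
  center_meet_gamma2_eq_general p G hG hclass hcyc helemexp
end

section
/- Let X be a 2-generated finite p-group of nilpotency class 3 with γ₃(X) elementary abelian. Then p ≤ |γ₃(X)| ≤ p². -/
/-!
If all commutators `⁅h, k⁆` are central modulo a subgroup `N`, the commutator map is
multiplicative in each variable modulo `N`. As `⁅γ₂(X), X⁆ = γ₃(X)` and `⁅γ₃(X), X⁆ = 1`,
applying this modulo `γ₃(X)` shows that `γ₂(X)` is generated by `⁅a, b⁆` modulo `γ₃(X)`, and
then modulo `1` that `γ₃(X)` is generated by the two central elements
`⁅⁅a, b⁆, a⁆` and `⁅⁅a, b⁆, b⁆`, each of order dividing `p`; so `|γ₃(X)| ≤ p²`. A nontrivial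
element of `γ₃(X)` has order `p`, which gives `p ≤ |γ₃(X)|`.
-/

open scoped commutatorElement Pointwise

namespace Subgroup

variable {G : Type*} [Group G]

theorem conj_mem_of_commutatorElement_mem {M : Subgroup G} {c g : G} (hc : c ∈ M)
    (hcg : ⁅c, g⁆ ∈ M) : g * c * g⁻¹ ∈ M := by
  have hconj : g * c * g⁻¹ = ⁅c, g⁆⁻¹ * c := by
    rw [commutatorElement_inv, ← conj_eq_commutatorElement_mul, MulAut.conj_apply]
  rw [hconj]
  exact M.mul_mem (M.inv_mem hcg) hc

theorem inv_conj_inv_mem_of_commutatorElement_mem {M : Subgroup G} {c g : G} (hc : c ∈ M)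
    (hcg : ⁅c, g⁻¹⁆ ∈ M) : g⁻¹ * c⁻¹ * g ∈ M := by
  have h := M.inv_mem (conj_mem_of_commutatorElement_mem hc hcg)
  simpa only [mul_inv_rev, inv_inv, mul_assoc] using h

theorem commutator_closure_le_closure_image2_sup {S T : Set G} {N : Subgroup G}
    (hN : ∀ h ∈ closure S, ∀ k ∈ closure T, ∀ g, ⁅⁅h, k⁆, g⁆ ∈ N) :
    ⁅closure S, closure T⁆ ≤ closure (Set.image2 (⁅·, ·⁆) S T) ⊔ N := by
  set M := closure (Set.image2 (⁅·, ·⁆) S T) ⊔ N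
  have hNM : ∀ {x}, x ∈ N → x ∈ M := fun hx => mem_sup_right hx
  have generator_left : ∀ s ∈ S, ∀ k ∈ closure T, ⁅s, k⁆ ∈ M := by
    intro s hs k hk
    have hs' := subset_closure hs
    induction hk using closure_induction with
    | mem t ht => exact mem_sup_left (subset_closure (Set.mem_image2_of_mem hs ht))
    | one => simp
    | mul k₁ k₂ _ hk₂ ih₁ ih₂ =>
      rw [commutatorElement_mul_right_eq_mul_conj, mul_assoc, mul_assoc, ← mul_assoc k₁]
      exact M.mul_mem ih₁ (conj_mem_of_commutatorElement_mem ih₂ (hNM (hN s hs' k₂ hk₂ k₁)))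
    | inv k hk ih =>
      rw [commutatorElement_inv_right, ← commutatorElement_inv]
      exact inv_conj_inv_mem_of_commutatorElement_mem ih (hNM (hN s hs' k hk k⁻¹))
  rw [commutator_le]
  intro h hh k hk
  induction hh using closure_induction with
  | mem s hs => exact generator_left s hs k hk
  | one => simp
  | mul h₁ h₂ _ hh₂ ih₁ ih₂ =>
    rw [commutatorElement_mul_left_eq_conj_mul]
    exact M.mul_mem (conj_mem_of_commutatorElement_mem ih₂ (hNM (hN h₂ hh₂ k hk h₁))) ih₁
  | inv h hh ih =>
    rw [commutatorElement_inv_left, ← commutatorElement_inv]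
    exact inv_conj_inv_mem_of_commutatorElement_mem ih (hNM (hN h hh k hk h⁻¹))

theorem normal_zpowers_of_mem_center {x : G} (hx : x ∈ center G) : (zpowers x).Normal where
  conj_mem n hn g := by
    rw [mem_center_iff.mp (zpowers_le.mpr hx hn) g, mul_inv_cancel_right]
    exact hn

theorem natCard_closure_pair_le {x y : G} (hx : x ∈ center G) :
    Nat.card (closure {x, y}) ≤ orderOf x * orderOf y := by
  have := normal_zpowers_of_mem_center hx
  have hsup : (closure {x, y} : Set G) = (zpowers x : Set G) * (zpowers y : Set G) := by
    rw [Set.insert_eq, closure_union, ← zpowers_eq_closure, ← zpowers_eq_closure, normal_mul]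
  calc Nat.card (closure {x, y}) = Nat.card ((zpowers x : Set G) * (zpowers y : Set G)) := by
        rw [← hsup]; rfl
    _ ≤ Nat.card (zpowers x) * Nat.card (zpowers y) := Set.natCard_mul_le
    _ = orderOf x * orderOf y := by rw [Nat.card_zpowers, Nat.card_zpowers]

theorem prime_le_natCard_of_pow_eq_one {p : ℕ} [Fact p.Prime] {H : Subgroup G} [Finite H]
    (hH : H ≠ ⊥) (hpow : ∀ x ∈ H, x ^ p = 1) : p ≤ Nat.card H := by
  obtain ⟨⟨x, hx⟩, hx1⟩ := ne_bot_iff_exists_ne_one.mp hH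
  have hx1' : x ≠ 1 := fun h => hx1 (Subtype.ext h)
  rw [← orderOf_eq_prime (hpow x hx) hx1']
  exact H.orderOf_le_card (Set.toFinite _) hx

theorem commutatorElement_commutatorElement_mem_lowerCentralSeries_two (h k g : G) :
    ⁅⁅h, k⁆, g⁆ ∈ (⊤ : Subgroup G).lowerCentralSeries 2 :=
  commutator_mem_commutator (commutator_mem_commutator (mem_top h) (mem_top k)) (mem_top g)

section TwoGenerated

variable {a b : G}

theorem lowerCentralSeries_one_le_closure_commutatorElement_sup (hab : closure {a, b} = ⊤) :
    (⊤ : Subgroup G).lowerCentralSeries 1 ≤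
      closure {⁅a, b⁆} ⊔ (⊤ : Subgroup G).lowerCentralSeries 2 := by
  calc (⊤ : Subgroup G).lowerCentralSeries 1 = ⁅closure {a, b}, closure {a, b}⁆ := by
        rw [hab]; rfl
    _ ≤ closure (Set.image2 (⁅·, ·⁆) {a, b} {a, b}) ⊔ (⊤ : Subgroup G).lowerCentralSeries 2 :=
        commutator_closure_le_closure_image2_sup fun h _ k _ g =>
          commutatorElement_commutatorElement_mem_lowerCentralSeries_two h k g
    _ ≤ closure {⁅a, b⁆} ⊔ (⊤ : Subgroup G).lowerCentralSeries 2 := by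
        refine sup_le_sup_right ((closure_le _).mpr ?_) _
        rintro _ ⟨s, hs | hs, t, ht | ht, rfl⟩ <;> subst s t
        · simp
        · exact subset_closure rfl
        · show ⁅b, a⁆ ∈ closure {⁅a, b⁆}
          rw [← commutatorElement_inv a b]
          exact inv_mem (subset_closure (Set.mem_singleton _))
        · simp

theorem lowerCentralSeries_two_le_closure_commutatorElement_pair (hab : closure {a, b} = ⊤)
    (h3 : (⊤ : Subgroup G).lowerCentralSeries 3 = ⊥) :
    (⊤ : Subgroup G).lowerCentralSeries 2 ≤ closure {⁅⁅a, b⁆, a⁆, ⁅⁅a, b⁆, b⁆} := by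
  set S := {⁅a, b⁆} ∪ ((⊤ : Subgroup G).lowerCentralSeries 2 : Set G) with hS_def
  have hS : closure S = closure {⁅a, b⁆} ⊔ (⊤ : Subgroup G).lowerCentralSeries 2 := by
    rw [hS_def, closure_union, closure_eq]
  have hS_le : closure S ≤ (⊤ : Subgroup G).lowerCentralSeries 1 := by
    refine hS ▸ sup_le ((closure_le _).mpr ?_) (lowerCentralSeries_antitone _ (by norm_num))
    simpa using commutator_mem_commutator (mem_top a) (mem_top b)
  have hN : ∀ h ∈ closure S, ∀ k ∈ closure {a, b}, ∀ g, ⁅⁅h, k⁆, g⁆ ∈ (⊥ : Subgroup G) :=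
    fun h hh k _ g => h3 ▸
      commutator_mem_commutator (commutator_mem_commutator (hS_le hh) (mem_top k)) (mem_top g)
  calc (⊤ : Subgroup G).lowerCentralSeries 2
        = ⁅(⊤ : Subgroup G).lowerCentralSeries 1, closure {a, b}⁆ := by rw [hab]; rfl
    _ ≤ ⁅closure S, closure {a, b}⁆ :=
        commutator_mono (hS ▸ lowerCentralSeries_one_le_closure_commutatorElement_sup hab) le_rfl
    _ ≤ closure (Set.image2 (⁅·, ·⁆) S {a, b}) ⊔ ⊥ := commutator_closure_le_closure_image2_sup hN
    _ ≤ closure {⁅⁅a, b⁆, a⁆, ⁅⁅a, b⁆, b⁆} := by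
        rw [sup_bot_eq, closure_le]
        rintro _ ⟨s, rfl | hs, t, ht, rfl⟩
        · rcases ht with rfl | rfl
          · exact subset_closure (Set.mem_insert _ _)
          · exact subset_closure (Set.mem_insert_of_mem _ rfl)
        · have hst : ⁅s, t⁆ ∈ (⊤ : Subgroup G).lowerCentralSeries 3 :=
            commutator_mem_commutator hs (mem_top t)
          show ⁅s, t⁆ ∈ closure _
          rw [h3, mem_bot] at hst
          rw [hst]
          exact one_mem _

end TwoGenerated

end Subgroup

theorem gamma3_card_bounds_general (p : ℕ) [Fact p.Prime] (X : Type*) [Group X] [Fintype X]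
    (hgen : ∃ a b : X, Subgroup.closure {a, b} = ⊤)
    (hclass : (⊤ : Subgroup X).lowerCentralSeries 2 ≠ ⊥ ∧ (⊤ : Subgroup X).lowerCentralSeries 3 = ⊥)
    (helemexp : ∀ x ∈ (⊤ : Subgroup X).lowerCentralSeries 2, x ^ p = 1) :
    p ≤ Nat.card ((⊤ : Subgroup X).lowerCentralSeries 2) ∧ Nat.card ((⊤ : Subgroup X).lowerCentralSeries 2) ≤ p ^ 2 := by
  obtain ⟨a, b, hab⟩ := hgen
  obtain ⟨hne, h3⟩ := hclass
  have hp := (Fact.out : p.Prime).pos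
  have hmem := Subgroup.commutatorElement_commutatorElement_mem_lowerCentralSeries_two a b
  have hcenter := Subgroup.commutator_top_right_eq_bot_iff_le_center.mp h3 (hmem a)
  refine ⟨Subgroup.prime_le_natCard_of_pow_eq_one hne helemexp, ?_⟩
  calc Nat.card ((⊤ : Subgroup X).lowerCentralSeries 2)
      ≤ Nat.card (Subgroup.closure {⁅⁅a, b⁆, a⁆, ⁅⁅a, b⁆, b⁆}) :=
        Subgroup.card_le_of_le
          (Subgroup.lowerCentralSeries_two_le_closure_commutatorElement_pair hab h3)
    _ ≤ orderOf ⁅⁅a, b⁆, a⁆ * orderOf ⁅⁅a, b⁆, b⁆ := Subgroup.natCard_closure_pair_le hcenter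
    _ ≤ p ^ 2 := by
        rw [sq]
        exact Nat.mul_le_mul (orderOf_le_of_pow_eq_one hp (helemexp _ (hmem a)))
          (orderOf_le_of_pow_eq_one hp (helemexp _ (hmem b)))

/-- Let `X` be a 2-generated finite `p`-group of nilpotency class 3 with `γ₃(X)` elementary
abelian. Then `p ≤ |γ₃(X)| ≤ p²`. -/
theorem gamma3_card_bounds (p : ℕ) [Fact p.Prime] (X : Type*) [Group X] [Fintype X]
    (hX : IsPGroup p X)
    (hgen : ∃ a b : X, Subgroup.closure {a, b} = ⊤)
    (hclass : (⊤ : Subgroup X).lowerCentralSeries 2 ≠ ⊥ ∧ (⊤ : Subgroup X).lowerCentralSeries 3 = ⊥)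
    (helemexp : ∀ x ∈ (⊤ : Subgroup X).lowerCentralSeries 2, x ^ p = 1)
    (helemab : ∀ x ∈ (⊤ : Subgroup X).lowerCentralSeries 2, ∀ y ∈ (⊤ : Subgroup X).lowerCentralSeries 2, x * y = y * x) :
    p ≤ Nat.card ((⊤ : Subgroup X).lowerCentralSeries 2) ∧ Nat.card ((⊤ : Subgroup X).lowerCentralSeries 2) ≤ p ^ 2 :=
  gamma3_card_bounds_general p X hgen hclass helemexp
end

section
/- Let 𝒪 be a p-obelisk. Then for every positive integer i, γ_i(𝒪)^p = γ_{i+2}(𝒪). -/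
/-!
Induction on `i`, the case `i = 1` being the hypothesis `O^p = γ₃(O)`. Suppose `γ_i^p = γ_{i+2}`.
For `x ∈ γ_i` and `g ∈ O`, put `c = [x, g]`, `d = [x, c]`, `e = [x, d]`. Modulo `γ_{i+4}` these
commute with each other and `e` commutes with `x`, so `[x^p, g] = c^p d^C(p,2) e^C(p,3)`; as `p > 3`
divides both binomial coefficients, this is a product of `p`-th powers of elements of `γ_{i+1}`.
Since `γ_{i+3} = [γ_i^p, O]`, this gives `γ_{i+3} ≤ γ_{i+1}^p γ_{i+4}`, and nilpotency of `O` turns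
it into `γ_{i+3} ≤ γ_{i+1}^p`. Conversely, modulo `γ_{i+3}` we have `[x^p, g] = 1`, and the same
expansion shows that the abelian groups `γ_{i+2}`, and then `γ_{i+1}`, have exponent `p`, i.e.
`γ_{i+1}^p ≤ γ_{i+3}`.
-/

/-- A `p`-obelisk is a finite non-abelian `p`-group `O` with `|O : γ₂(O)| = p²` and
`O^p = γ₃(O)`. -/
def IsPObelisk (p : ℕ) (O : Type*) [Group O] [Fintype O] : Prop :=
  IsPGroup p O ∧ (⊤ : Subgroup O).lowerCentralSeries 1 ≠ ⊥ ∧ ((⊤ : Subgroup O).lowerCentralSeries 1).index = p ^ 2 ∧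
    Subgroup.closure ((· ^ p) '' (Set.univ : Set O)) = (⊤ : Subgroup O).lowerCentralSeries 2

open scoped commutatorElement

open Subgroup QuotientGroup

-- `γ G n` is the paper's `γ_{n+1}(G)`: Mathlib indexes the lower central series from `0`.
notation "γ" G:max n:max => Subgroup.lowerCentralSeries (⊤ : Subgroup G) n

section CommutatorCalculus

variable {G : Type*} [Group G]

theorem commutatorElement_pow_left (x g : G)
    (hcd : Commute ⁅x, g⁆ ⁅x, ⁅x, g⁆⁆) (hce : Commute ⁅x, g⁆ ⁅x, ⁅x, ⁅x, g⁆⁆⁆)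
    (hde : Commute ⁅x, ⁅x, g⁆⁆ ⁅x, ⁅x, ⁅x, g⁆⁆⁆) (hxe : Commute x ⁅x, ⁅x, ⁅x, g⁆⁆⁆) (k : ℕ) :
    ⁅x ^ k, g⁆ = ⁅x, g⁆ ^ k * ⁅x, ⁅x, g⁆⁆ ^ k.choose 2 * ⁅x, ⁅x, ⁅x, g⁆⁆⁆ ^ k.choose 3 := by
  set c := ⁅x, g⁆
  set d := ⁅x, c⁆
  set e := ⁅x, d⁆
  have conj_c : MulAut.conj x c = d * c := by
    simp only [d, MulAut.conj_apply, commutatorElement_def]; group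
  have conj_d : MulAut.conj x d = e * d := by
    simp only [e, MulAut.conj_apply, commutatorElement_def]; group
  have conj_e : MulAut.conj x e = e := by rw [MulAut.conj_apply, hxe.eq, mul_inv_cancel_right]
  induction k with
  | zero => simp
  | succ k ih =>
    have hstep : ⁅x ^ (k + 1), g⁆ = MulAut.conj x ⁅x ^ k, g⁆ * c := by
      simp only [c, MulAut.conj_apply, commutatorElement_def]; group
    rw [hstep, ih, map_mul, map_mul, map_pow, map_pow, map_pow, conj_c, conj_d, conj_e,
      hcd.symm.mul_pow, hde.symm.mul_pow, Nat.choose_succ_succ, Nat.choose_one_right,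
      Nat.choose_succ_succ]
    set B := k.choose 2
    set F := k.choose 3
    calc d ^ k * c ^ k * (e ^ B * d ^ B) * e ^ F * c
        = d ^ k * (c ^ k * d ^ B) * (e ^ B * e ^ F) * c := by
          rw [(hde.pow_pow B B).symm.eq]; simp only [mul_assoc]
      _ = d ^ (k + B) * (c ^ k * (e ^ (B + F) * c)) := by
          rw [(hcd.pow_pow k B).eq]; simp only [pow_add, mul_assoc]
      _ = c ^ (k + 1) * d ^ (k + B) * e ^ (B + F) := by
          rw [← (hce.pow_right (B + F)).eq, ← mul_assoc (c ^ k), ← pow_succ, ← mul_assoc,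
            (hcd.symm.pow_pow _ _).eq, mul_assoc]

end CommutatorCalculus

namespace Subgroup

variable {G H : Type*} [Group G] [Group H]

/-- The paper's `K^n`. -/
def powClosure (n : ℕ) (K : Subgroup G) : Subgroup G :=
  closure ((· ^ n) '' (K : Set G))

theorem powClosure_le_iff {n : ℕ} {K L : Subgroup G} :
    powClosure n K ≤ L ↔ ∀ x ∈ K, x ^ n ∈ L := by
  simp [powClosure, closure_le, Set.subset_def]

theorem pow_mem_powClosure {n : ℕ} {K : Subgroup G} {x : G} (hx : x ∈ K) :
    x ^ n ∈ powClosure n K :=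
  subset_closure ⟨x, hx, rfl⟩

theorem map_powClosure (f : G →* H) (n : ℕ) (K : Subgroup G) :
    (powClosure n K).map f = powClosure n (K.map f) := by
  simp only [powClosure, MonoidHom.map_closure, coe_map, Set.image_image, map_pow]

instance powClosure_characteristic (n : ℕ) (K : Subgroup G) [K.Characteristic] :
    (powClosure n K).Characteristic :=
  characteristic_iff_map_le.mpr fun ϕ ↦ by
    rw [map_powClosure, characteristic_iff_map_eq.mp ‹_› ϕ]

theorem commutator_commutator_le_of_rotate {H₁ H₂ H₃ N : Subgroup G} [N.Normal]
    (h1 : ⁅⁅H₂, H₃⁆, H₁⁆ ≤ N) (h2 : ⁅⁅H₃, H₁⁆, H₂⁆ ≤ N) : ⁅⁅H₁, H₂⁆, H₃⁆ ≤ N := by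
  simp only [← ker_mk' N, ← map_eq_bot_iff, map_commutator] at h1 h2 ⊢
  exact commutator_commutator_eq_bot_of_rotate h1 h2

theorem commutator_closure_top_le {T : Set G} {N : Subgroup G} [N.Normal]
    (h : ∀ t ∈ T, ∀ g, ⁅t, g⁆ ∈ N) : ⁅closure T, ⊤⁆ ≤ N := by
  rw [← ker_mk' N, ← map_eq_bot_iff, map_commutator, map_top_of_surjective _ (mk'_surjective N),
    commutator_top_right_eq_bot_iff_le_center, MonoidHom.map_closure, closure_le]
  rintro _ ⟨t, ht, rfl⟩
  rw [SetLike.mem_coe, mem_center_iff]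
  intro q
  obtain ⟨g, rfl⟩ := mk'_surjective N q
  have : (mk' N) ⁅t, g⁆ = 1 := (MonoidHom.mem_ker).mp ((ker_mk' N).symm ▸ h t ht g)
  rw [map_commutatorElement, commutatorElement_eq_one_iff_mul_comm] at this
  exact this.symm

theorem eq_bot_of_le_commutator_top [Group.IsNilpotent G] {K : Subgroup G}
    (hK : K ≤ ⁅K, ⊤⁆) : K = ⊥ := by
  obtain ⟨n, hn⟩ := nilpotent_iff_lowerCentralSeries.mp ‹_›
  have : ∀ k, K ≤ γ G k := fun k ↦ by
    induction k with
    | zero => exact le_top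
    | succ k ih => exact hK.trans (commutator_mono ih le_rfl)
  exact le_bot_iff.mp (hn ▸ this n)

theorem le_of_le_sup_commutator_top [Group.IsNilpotent G] {K N : Subgroup G} [N.Normal]
    (hK : K ≤ N ⊔ ⁅K, ⊤⁆) : K ≤ N := by
  have hmap : K.map (mk' N) ≤ ⁅K.map (mk' N), ⊤⁆ := by
    have := map_mono (f := mk' N) hK
    rwa [map_sup, map_commutator, map_top_of_surjective _ (mk'_surjective N),
      (map_eq_bot_iff _).mpr (ker_mk' N).ge, bot_sup_eq] at this
  rw [← ker_mk' N, ← map_eq_bot_iff]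
  exact eq_bot_of_le_commutator_top hmap

theorem map_lcs_of_surjective {f : G →* H} (hf : Function.Surjective f) (n : ℕ) :
    (γ G n).map f = γ H n := by
  rw [map_lowerCentralSeries, map_top_of_surjective f hf]

theorem lcs_quotient_lcs_eq_bot (n : ℕ) : γ (G ⧸ γ G n) n = ⊥ := by
  rw [← map_lcs_of_surjective (mk'_surjective _), map_eq_bot_iff, ker_mk']

theorem commutator_lcs_le (m n : ℕ) : ⁅γ G m, γ G n⁆ ≤ γ G (m + n + 1) := by
  induction n generalizing m with
  | zero => exact le_rfl
  | succ n ih =>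
    rw [lowerCentralSeries_succ, commutator_comm]
    apply commutator_commutator_le_of_rotate
    · rw [commutator_comm ⊤, ← lowerCentralSeries_succ]
      exact (ih (m + 1)).trans (lowerCentralSeries_antitone _ (by omega))
    · exact commutator_mono (ih m) le_rfl

theorem commutatorElement_mem_lcs_succ {n : ℕ} {x : G} (hx : x ∈ γ G n) (g : G) :
    ⁅x, g⁆ ∈ γ G (n + 1) :=
  commutator_mem_commutator hx (mem_top g)

theorem commutatorElement_mem_lcs_succ' (g : G) {n : ℕ} {x : G} (hx : x ∈ γ G n) :
    ⁅g, x⁆ ∈ γ G (n + 1) := by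
  rw [← commutatorElement_inv]
  exact inv_mem (commutatorElement_mem_lcs_succ hx g)

theorem eq_one_of_mem_lcs {n m : ℕ} (hbot : γ G n = ⊥) (h : n ≤ m) {x : G} (hx : x ∈ γ G m) :
    x = 1 := by
  simpa [hbot] using lowerCentralSeries_antitone _ h hx

theorem commute_of_mem_lcs {n s t : ℕ} (hbot : γ G n = ⊥) (h : n ≤ s + t + 1) {x y : G}
    (hx : x ∈ γ G s) (hy : y ∈ γ G t) : Commute x y :=
  commutatorElement_eq_one_iff_commute.mp
    (eq_one_of_mem_lcs hbot h (commutator_lcs_le s t (commutator_mem_commutator hx hy)))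

theorem commutatorElement_pow_left_of_lcs_eq_bot {n s : ℕ} (hbot : γ G n = ⊥)
    (hn : n ≤ 2 * s + 4) {x : G} (hx : x ∈ γ G s) (g : G) (k : ℕ) :
    ⁅x ^ k, g⁆ = ⁅x, g⁆ ^ k * ⁅x, ⁅x, g⁆⁆ ^ k.choose 2 * ⁅x, ⁅x, ⁅x, g⁆⁆⁆ ^ k.choose 3 := by
  have hc := commutatorElement_mem_lcs_succ hx g
  have hd := commutatorElement_mem_lcs_succ' x hc
  have he := commutatorElement_mem_lcs_succ' x hd
  exact commutatorElement_pow_left x g (commute_of_mem_lcs hbot (by omega) hc hd)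
    (commute_of_mem_lcs hbot (by omega) hc he) (commute_of_mem_lcs hbot (by omega) hd he)
    (commute_of_mem_lcs hbot (by omega) hx he) k

theorem pow_eq_one_of_mem_lcs_succ {n s q : ℕ} (hbot : γ G n = ⊥) (hn : n ≤ 2 * s + 3)
    (hgen : ∀ a ∈ γ G s, ∀ g : G, ⁅a, g⁆ ^ q = 1) {z : G} (hz : z ∈ γ G (s + 1)) :
    z ^ q = 1 := by
  rw [lowerCentralSeries_succ, commutator_def] at hz
  induction hz using closure_induction with
  | mem _ h => obtain ⟨a, ha, g, -, rfl⟩ := h; exact hgen a ha g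
  | one => exact one_pow q
  | mul y z hy hz ihy ihz =>
    rw [(commute_of_mem_lcs (s := s + 1) (t := s + 1) hbot (by omega) hy hz).mul_pow, ihy, ihz,
      one_mul]
  | inv y _ ih => rw [inv_pow, ih, inv_one]

theorem powClosure_lcs_succ_eq_bot {s p : ℕ} (hbot : γ G (s + 3) = ⊥)
    (hpow : powClosure p (γ G s) ≤ γ G (s + 2)) (hp : p ∣ p.choose 2) :
    powClosure p (γ G (s + 1)) = ⊥ := by
  have hcomm : ∀ a ∈ γ G s, ∀ g : G, ⁅a ^ p, g⁆ = 1 := fun a ha g ↦ eq_one_of_mem_lcs hbot le_rfl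
    (commutatorElement_mem_lcs_succ (powClosure_le_iff.mp hpow a ha) g)
  have htop : ∀ z ∈ γ G (s + 2), z ^ p = 1 := fun z ↦
    pow_eq_one_of_mem_lcs_succ hbot (by omega) fun a ha g ↦ by
      have hd := commutatorElement_mem_lcs_succ' a (commutatorElement_mem_lcs_succ ha g)
      calc ⁅a, g⁆ ^ p = ⁅a ^ p, g⁆ := by
            rw [commutatorElement_pow_left_of_lcs_eq_bot hbot (by omega) ha g,
              eq_one_of_mem_lcs hbot le_rfl hd]
            simp
        _ = 1 := hcomm a (lowerCentralSeries_antitone _ (by omega) ha) g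
  obtain ⟨m, hm⟩ := hp
  rw [eq_bot_iff, powClosure_le_iff]
  refine fun z hz ↦ mem_bot.mpr (pow_eq_one_of_mem_lcs_succ hbot (by omega) (fun a ha g ↦ ?_) hz)
  have hd := commutatorElement_mem_lcs_succ' a (commutatorElement_mem_lcs_succ ha g)
  have he := commutatorElement_mem_lcs_succ' a hd
  calc ⁅a, g⁆ ^ p = ⁅a ^ p, g⁆ := by
        rw [commutatorElement_pow_left_of_lcs_eq_bot hbot (by omega) ha g, hm, pow_mul, htop _ hd,
          eq_one_of_mem_lcs hbot le_rfl he]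
        simp
    _ = 1 := hcomm a ha g

theorem lcs_le_powClosure_of_lcs_eq_bot {s p : ℕ} (hbot : γ G (s + 4) = ⊥)
    (hgen : γ G (s + 2) ≤ powClosure p (γ G s)) (hp2 : p ∣ p.choose 2) (hp3 : p ∣ p.choose 3) :
    γ G (s + 3) ≤ powClosure p (γ G (s + 1)) := by
  obtain ⟨m₂, hm₂⟩ := hp2
  obtain ⟨m₃, hm₃⟩ := hp3
  refine (commutator_mono hgen le_rfl).trans (commutator_closure_top_le ?_)
  rintro _ ⟨x, hx, rfl⟩ g
  have hc := commutatorElement_mem_lcs_succ hx g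
  have hd := commutatorElement_mem_lcs_succ' x hc
  have he := commutatorElement_mem_lcs_succ' x hd
  rw [commutatorElement_pow_left_of_lcs_eq_bot hbot (by omega) hx g, hm₂, hm₃, pow_mul', pow_mul']
  refine mul_mem (mul_mem (pow_mem_powClosure hc) (pow_mem_powClosure ?_)) (pow_mem_powClosure ?_)
  · exact lowerCentralSeries_antitone _ (by omega) (pow_mem hd m₂)
  · exact lowerCentralSeries_antitone _ (by omega) (pow_mem he m₃)

theorem powClosure_lcs_succ [Group.IsNilpotent G] {s p : ℕ} (hp2 : p ∣ p.choose 2)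
    (hp3 : p ∣ p.choose 3) (h : powClosure p (γ G s) = γ G (s + 2)) :
    powClosure p (γ G (s + 1)) = γ G (s + 3) := by
  have h_quot : ∀ k, powClosure p (γ (G ⧸ γ G k) s) = γ (G ⧸ γ G k) (s + 2) := fun k ↦ by
    rw [← map_lcs_of_surjective (mk'_surjective _), ← map_lcs_of_surjective (mk'_surjective _),
      ← map_powClosure, h]
  apply le_antisymm
  · have := powClosure_lcs_succ_eq_bot (lcs_quotient_lcs_eq_bot (s + 3)) (h_quot _).le hp2
    rwa [← map_lcs_of_surjective (mk'_surjective _), ← map_powClosure, map_eq_bot_iff,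
      ker_mk'] at this
  · apply le_of_le_sup_commutator_top
    have := lcs_le_powClosure_of_lcs_eq_bot (lcs_quotient_lcs_eq_bot (s + 4)) (h_quot _).ge hp2 hp3
    rwa [← map_lcs_of_surjective (mk'_surjective _), ← map_lcs_of_surjective (mk'_surjective _),
      ← map_powClosure, map_le_map_iff, ker_mk'] at this

end Subgroup

/-- If `O` is a `p`-obelisk (`p > 3`), then `γ_i(O)^p = γ_{i+2}(O)` for every `i ≥ 1`. -/
theorem obelisk_lcs_pow (p : ℕ) [Fact p.Prime] (hp : 3 < p)
    (O : Type*) [Group O] [Fintype O] (hO : IsPObelisk p O) :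
    ∀ i : ℕ, 1 ≤ i →
      Subgroup.closure ((· ^ p) '' ((⊤ : Subgroup O).lowerCentralSeries (i - 1) : Set O))
        = (⊤ : Subgroup O).lowerCentralSeries (i + 1) := by
  obtain ⟨hpgroup, -, -, hbase⟩ := hO
  have := hpgroup.isNilpotent
  have hp2 : p ∣ p.choose 2 := Nat.Prime.dvd_choose_self Fact.out two_ne_zero (by omega)
  have hp3 : p ∣ p.choose 3 := Nat.Prime.dvd_choose_self Fact.out three_ne_zero (by omega)
  have key : ∀ s, powClosure p (γ O s) = γ O (s + 2) := by
    intro s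
    induction s with
    | zero => simpa [powClosure] using hbase
    | succ s ih => exact powClosure_lcs_succ hp2 hp3 ih
  intro i hi
  obtain ⟨s, rfl⟩ := Nat.exists_eq_add_of_le' hi
  exact key s
end
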